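/- arXiv:0803.0722 — 5 statements merged into one kernel-verified Lean document; each statement's English description precedes it below -/
import Mathlib

section
/- If (X,Y) is a pair of commuting upper triangular matrices and X or Y commutes with some regular upper triangular matrix, then (X,Y) lies in CT_n^0, the closure of the pairs of commuting regular upper triangular matrices. -/
open Matrix Polynomial

/-- Points of the affine space `T_n × T_n` (resp. `U_n × U_n`), encoded as functions
from (index pairs for X) ⊕ (index pairs for Y) to the field. -/
abbrev Pt (n : ℕ) (K : Type*) := ((Fin n × Fin n) ⊕ (Fin n × Fin n)) → K

/-- The Zariski topology on the affine space of pairs of matrices: generated by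
complements of zero loci of polynomials. -/
noncomputable instance ptTop (n : ℕ) (K : Type*) [CommRing K] : TopologicalSpace (Pt n K) :=
  TopologicalSpace.generateFrom
    { U | ∃ p : MvPolynomial ((Fin n × Fin n) ⊕ (Fin n × Fin n)) K,
        U = {x | MvPolynomial.eval x p ≠ 0} }

/-- The first matrix of the pair encoded by a point. -/
def Xof {n : ℕ} {K : Type*} (x : Pt n K) : Matrix (Fin n) (Fin n) K :=
  Matrix.of fun i j => x (Sum.inl (i, j))

/-- The second matrix of the pair encoded by a point. -/
def Yof {n : ℕ} {K : Type*} (x : Pt n K) : Matrix (Fin n) (Fin n) K :=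
  Matrix.of fun i j => x (Sum.inr (i, j))

/-- `CT_n`: pairs of commuting upper triangular matrices. -/
def CTset (n : ℕ) (K : Type*) [CommRing K] : Set (Pt n K) :=
  {x | (∀ i j, j < i → Xof x i j = 0) ∧ (∀ i j, j < i → Yof x i j = 0) ∧
    Xof x * Yof x = Yof x * Xof x}

/-- `NT_n`: pairs of commuting strictly upper triangular matrices. -/
def NTset (n : ℕ) (K : Type*) [CommRing K] : Set (Pt n K) :=
  {x | (∀ i j, j ≤ i → Xof x i j = 0) ∧ (∀ i j, j ≤ i → Yof x i j = 0) ∧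
    Xof x * Yof x = Yof x * Xof x}

/-- `CT_n^0`: the Zariski closure of the set of commuting pairs of regular
(minimal polynomial of degree `n`) upper triangular matrices. -/
def CT0 (n : ℕ) (K : Type*) [Field K] : Set (Pt n K) :=
  closure {x | x ∈ CTset n K ∧ (minpoly K (Xof x)).natDegree = n ∧
    (minpoly K (Yof x)).natDegree = n}

/-!
If `X` commutes with a regular upper triangular `R`, the matrices on the line from `Y` to `R`
all lie in the centralizer of `X` in `T_n`, which is a linear space, so every `(X, Y_t)` on
this line is in `CT_n`. Regularity of `A` means that some `n × n` minor of the matrix of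
entries of `1, A, …, A^(n-1)` is nonzero, a polynomial condition in `t` that holds at `R`,
hence for all but finitely many `t`. The Zariski topology induces the cofinite topology on a
line, so `(X, Y)` lies in the closure of the pairs `(X, Y')` with `Y'` regular; for those,
the same deformation of `X` towards `Y'` makes both matrices regular.
-/

section LinearAlgebra

variable {K : Type*} [Field K] {n : ℕ}

theorem Matrix.exists_det_submatrix_ne_zero {ι : Type*} [Fintype ι] {M : Matrix (Fin n) ι K}
    (hM : LinearIndependent K M.row) : ∃ f : Fin n → ι, (M.submatrix id f).det ≠ 0 := by
  obtain ⟨κ, a, -, hspan, hli⟩ := exists_linearIndependent' K M.col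
  have hcols : Submodule.span K (Set.range M.col) = ⊤ := by
    apply Submodule.eq_top_of_finrank_eq
    rw [← rank_eq_finrank_span_cols, hM.rank_matrix, Module.finrank_fin_fun, Fintype.card_fin]
  let e : κ ≃ Fin n := (Module.Basis.mk hli (hspan.trans hcols).ge).indexEquiv (Pi.basisFun K _)
  refine ⟨a ∘ e.symm, fun h => ?_⟩
  have hunit : IsUnit (M.submatrix id (a ∘ e.symm)) :=
    linearIndependent_cols_iff_isUnit.mp (hli.comp e.symm e.symm.injective)
  exact ((isUnit_iff_isUnit_det _).mp hunit).ne_zero h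

theorem Matrix.linearIndependent_row_of_det_submatrix_ne_zero {ι : Type*}
    {M : Matrix (Fin n) ι K} {f : Fin n → ι} (h : (M.submatrix id f).det ≠ 0) :
    LinearIndependent K M.row :=
  LinearIndependent.of_comp (LinearMap.funLeft K K f)
    (linearIndependent_rows_iff_isUnit.mpr ((isUnit_iff_isUnit_det _).mpr h.isUnit))

theorem Matrix.natDegree_minpoly_le (A : Matrix (Fin n) (Fin n) K) :
    (minpoly K A).natDegree ≤ n := by
  simpa using natDegree_le_of_dvd A.minpoly_dvd_charpoly A.charpoly_monic.ne_zero

theorem Matrix.natDegree_minpoly_eq_iff_linearIndependent_pow (A : Matrix (Fin n) (Fin n) K) :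
    (minpoly K A).natDegree = n ↔ LinearIndependent K fun i : Fin n => A ^ (i : ℕ) := by
  refine ⟨fun h => ?_, fun h => le_antisymm A.natDegree_minpoly_le ?_⟩
  · have := linearIndependent_pow (K := K) A
    rwa [h] at this
  have hspan : Submodule.span K (Set.range fun i : Fin n => A ^ (i : ℕ)) ≤
      Submodule.span K (Set.range fun i : Fin (minpoly K A).natDegree => A ^ (i : ℕ)) :=
    Submodule.span_le.mpr <| Set.range_subset_iff.mpr fun i =>
      (Matrix.isIntegral A).mem_span_pow ⟨X ^ (i : ℕ), by simp⟩
  simpa [finrank_span_eq_card h] using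
    (Submodule.finrank_mono hspan).trans (finrank_range_le_card _)

def Matrix.powersMatrix {R : Type*} [CommSemiring R] (A : Matrix (Fin n) (Fin n) R) :
    Matrix (Fin n) (Fin n × Fin n) R :=
  of fun i p => (A ^ (i : ℕ)) p.1 p.2

theorem Matrix.powersMatrix_map {R S : Type*} [CommSemiring R] [CommSemiring S] (φ : R →+* S)
    (A : Matrix (Fin n) (Fin n) R) : A.powersMatrix.map φ = (A.map φ).powersMatrix := by
  ext i p
  simp only [powersMatrix, map_apply, of_apply, ← RingHom.mapMatrix_apply, ← map_pow]
  rfl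

theorem Matrix.natDegree_minpoly_eq_iff_linearIndependent_powersMatrix
    (A : Matrix (Fin n) (Fin n) K) :
    (minpoly K A).natDegree = n ↔ LinearIndependent K A.powersMatrix.row := by
  rw [natDegree_minpoly_eq_iff_linearIndependent_pow,
    ← (LinearEquiv.curry K K (Fin n) (Fin n)).toLinearMap.linearIndependent_iff (by simp)]
  rfl

theorem Matrix.finite_setOf_natDegree_minpoly_map_eval_ne (A : Matrix (Fin n) (Fin n) K[X])
    {t₁ : K} (h : (minpoly K (A.map (eval t₁))).natDegree = n) :
    {t | (minpoly K (A.map (eval t))).natDegree ≠ n}.Finite := by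
  obtain ⟨f, hf⟩ := exists_det_submatrix_ne_zero
    ((natDegree_minpoly_eq_iff_linearIndependent_powersMatrix _).mp h)
  set p : K[X] := (A.powersMatrix.submatrix id f).det
  have hp : ∀ t, p.eval t = ((A.map (eval t)).powersMatrix.submatrix id f).det := fun t => by
    rw [← coe_evalRingHom, RingHom.map_det, RingHom.mapMatrix_apply, ← submatrix_map,
      powersMatrix_map]
  refine (p.finite_setOfPred_isRoot fun h0 => hf (by rw [← hp, h0, eval_zero])).subset
    fun t ht => ?_
  by_contra hroot
  exact ht ((natDegree_minpoly_eq_iff_linearIndependent_powersMatrix _).mpr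
    (linearIndependent_row_of_det_submatrix_ne_zero (by rwa [← hp])))

theorem Matrix.finite_setOf_natDegree_minpoly_lineMap_ne (A : Matrix (Fin n) (Fin n) K)
    {B : Matrix (Fin n) (Fin n) K} (hB : (minpoly K B).natDegree = n) :
    {t : K | (minpoly K (AffineMap.lineMap A B t)).natDegree ≠ n}.Finite := by
  let L : Matrix (Fin n) (Fin n) K[X] := A.map C + (X : K[X]) • (B - A).map C
  have hL : ∀ t, L.map (eval t) = AffineMap.lineMap A B t := fun t => by
    ext i j; simp [L, AffineMap.lineMap_apply_module']; ring
  simpa only [hL] using finite_setOf_natDegree_minpoly_map_eval_ne L (t₁ := 1)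
    (by rw [hL, AffineMap.lineMap_apply_one, hB])

def upperCentralizer (A : Matrix (Fin n) (Fin n) K) :
    Subalgebra K (Matrix (Fin n) (Fin n) K) :=
  blockTriangularSubalgebra K K id ⊓ Subalgebra.centralizer K {A}

theorem mem_upperCentralizer {A B : Matrix (Fin n) (Fin n) K} :
    B ∈ upperCentralizer A ↔ (∀ i j, j < i → B i j = 0) ∧ A * B = B * A := by
  simp [upperCentralizer, Subalgebra.mem_centralizer_iff, BlockTriangular]

theorem lineMap_mem_upperCentralizer {A B C : Matrix (Fin n) (Fin n) K}
    (hB : B ∈ upperCentralizer A) (hC : C ∈ upperCentralizer A) (t : K) :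
    AffineMap.lineMap B C t ∈ upperCentralizer A :=
  AffineMap.lineMap_mem (Q := (upperCentralizer A).toSubmodule.toAffineSubspace) t hB hC

end LinearAlgebra

section ZariskiTopology

variable {K : Type*} [Field K] {n : ℕ}

/-- A polynomial restricted to a line is a polynomial in one variable, so a basic Zariski open
set meets a line in an empty or cofinite set. -/
theorem continuous_lineMap_ofCofinite (x y : Pt n K) :
    Continuous fun t : CofiniteTopology K =>
      AffineMap.lineMap x y (CofiniteTopology.of.symm t) := by
  refine continuous_generateFrom_iff.mpr ?_
  rintro _ ⟨q, rfl⟩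
  set r : K[X] := MvPolynomial.aeval (fun s => C (x s) + X * C (y s - x s)) q
  have hr : ∀ t, r.eval t = MvPolynomial.eval (AffineMap.lineMap x y t) q := fun t => by
    have hline : (fun s => aeval t (C (x s) + X * C (y s - x s))) = AffineMap.lineMap x y t := by
      ext s; simp [AffineMap.lineMap_apply_module']; ring
    rw [← coe_aeval_eq_eval, MvPolynomial.comp_aeval_apply, hline]
    rfl
  refine CofiniteTopology.isOpen_iff.mpr fun ⟨t, ht⟩ => ?_
  refine ((r.finite_setOfPred_isRoot fun h0 => ht ?_).preimage
    CofiniteTopology.of.symm.injective.injOn).subset fun u hu => ?_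
  · simp [← hr, h0]
  · simpa [← hr] using hu

theorem mem_closure_of_finite_setOf_lineMap_notMem [Infinite K] {S : Set (Pt n K)}
    (x y : Pt n K) (hS : {t : K | AffineMap.lineMap x y t ∉ S}.Finite) : x ∈ closure S := by
  have : Infinite (CofiniteTopology K) := CofiniteTopology.of.infinite_iff.mp ‹_›
  set f := fun t : CofiniteTopology K => AffineMap.lineMap x y (CofiniteTopology.of.symm t)
  have hdense : closure (f ⁻¹' S) = Set.univ := by
    refine (CofiniteTopology.isClosed_iff.mp isClosed_closure).resolve_right fun hfin => ?_
    exact Set.infinite_of_finite_compl (hS.preimage CofiniteTopology.of.symm.injective.injOn)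
      (hfin.subset subset_closure)
  have := (continuous_lineMap_ofCofinite x y).closure_preimage_subset S
    (hdense.symm ▸ Set.mem_univ (CofiniteTopology.of 0))
  rwa [Set.mem_preimage, Equiv.symm_apply_apply, AffineMap.lineMap_apply_zero] at this

end ZariskiTopology

section Pairs

variable {K : Type*} {n : ℕ}

def ofPair (A B : Matrix (Fin n) (Fin n) K) : Pt n K :=
  Sum.elim (fun p => A p.1 p.2) (fun p => B p.1 p.2)

@[simp] theorem Xof_ofPair (A B : Matrix (Fin n) (Fin n) K) : Xof (ofPair A B) = A := rfl

@[simp] theorem Yof_ofPair (A B : Matrix (Fin n) (Fin n) K) : Yof (ofPair A B) = B := rfl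

theorem ofPair_Xof_Yof (x : Pt n K) : ofPair (Xof x) (Yof x) = x := by
  ext (p | p) <;> rfl

variable [Field K]

theorem ofPair_lineMap (A B C D : Matrix (Fin n) (Fin n) K) (t : K) :
    AffineMap.lineMap (ofPair A B) (ofPair C D) t =
      ofPair (AffineMap.lineMap A C t) (AffineMap.lineMap B D t) := by
  ext (p | p) <;> simp [ofPair, AffineMap.lineMap_apply_module]

theorem ofPair_mem_CTset_iff {A B : Matrix (Fin n) (Fin n) K} :
    ofPair A B ∈ CTset n K ↔ (∀ i j, j < i → A i j = 0) ∧ B ∈ upperCentralizer A := by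
  simp [CTset, mem_upperCentralizer]

theorem ofPair_mem_CTset_iff' {A B : Matrix (Fin n) (Fin n) K} :
    ofPair A B ∈ CTset n K ↔ (∀ i j, j < i → B i j = 0) ∧ A ∈ upperCentralizer B := by
  rw [ofPair_mem_CTset_iff, mem_upperCentralizer, mem_upperCentralizer]
  exact ⟨fun ⟨hA, hB, hAB⟩ => ⟨hB, hA, hAB.symm⟩,
    fun ⟨hB, hA, hBA⟩ => ⟨hA, hB, hBA.symm⟩⟩

theorem ofPair_mem_closure_regular_snd [Infinite K] {A B R : Matrix (Fin n) (Fin n) K}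
    (hA : ∀ i j, j < i → A i j = 0) (hB : B ∈ upperCentralizer A)
    (hR : R ∈ upperCentralizer A) (hRreg : (minpoly K R).natDegree = n) :
    ofPair A B ∈
      closure {y | y ∈ CTset n K ∧ Xof y = A ∧ (minpoly K (Yof y)).natDegree = n} := by
  refine mem_closure_of_finite_setOf_lineMap_notMem _ (ofPair A R) <|
    (finite_setOf_natDegree_minpoly_lineMap_ne B hRreg).subset fun t ht => ?_
  by_contra hreg
  apply ht
  rw [ofPair_lineMap, AffineMap.lineMap_same_apply]
  exact ⟨ofPair_mem_CTset_iff.mpr ⟨hA, lineMap_mem_upperCentralizer hB hR t⟩, rfl,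
    of_not_not hreg⟩

theorem ofPair_mem_closure_regular_fst [Infinite K] {A B R : Matrix (Fin n) (Fin n) K}
    (hB : ∀ i j, j < i → B i j = 0) (hA : A ∈ upperCentralizer B)
    (hR : R ∈ upperCentralizer B) (hRreg : (minpoly K R).natDegree = n) :
    ofPair A B ∈
      closure {y | y ∈ CTset n K ∧ Yof y = B ∧ (minpoly K (Xof y)).natDegree = n} := by
  refine mem_closure_of_finite_setOf_lineMap_notMem _ (ofPair R B) <|
    (finite_setOf_natDegree_minpoly_lineMap_ne A hRreg).subset fun t ht => ?_
  by_contra hreg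
  apply ht
  rw [ofPair_lineMap, AffineMap.lineMap_same_apply]
  exact ⟨ofPair_mem_CTset_iff'.mpr ⟨hB, lineMap_mem_upperCentralizer hA hR t⟩, rfl,
    of_not_not hreg⟩

theorem mem_CT0_of_regular_snd [Infinite K] {x : Pt n K} (hx : x ∈ CTset n K)
    (hreg : (minpoly K (Yof x)).natDegree = n) : x ∈ CT0 n K := by
  rw [← ofPair_Xof_Yof x] at hx ⊢
  obtain ⟨hY, hX⟩ := ofPair_mem_CTset_iff'.mp hx
  refine closure_mono ?_
    (ofPair_mem_closure_regular_fst hY hX (mem_upperCentralizer.mpr ⟨hY, rfl⟩) hreg)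
  rintro y ⟨hy, hyY, hyX⟩
  exact ⟨hy, hyX, hyY ▸ hreg⟩

theorem mem_CT0_of_regular_fst [Infinite K] {x : Pt n K} (hx : x ∈ CTset n K)
    (hreg : (minpoly K (Xof x)).natDegree = n) : x ∈ CT0 n K := by
  rw [← ofPair_Xof_Yof x] at hx ⊢
  obtain ⟨hX, hY⟩ := ofPair_mem_CTset_iff.mp hx
  refine closure_mono ?_
    (ofPair_mem_closure_regular_snd hX hY (mem_upperCentralizer.mpr ⟨hX, rfl⟩) hreg)
  rintro y ⟨hy, hyX, hyY⟩
  exact ⟨hy, hyX ▸ hreg, hyY⟩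

end Pairs

/-- If `(X,Y) ∈ CT_n` and `X` or `Y` commutes with a regular upper triangular matrix,
then `(X,Y) ∈ CT_n^0`. -/
theorem stmt6 {n : ℕ} {K : Type*} [Field K] [IsAlgClosed K]
    (x : Pt n K) (hx : x ∈ CTset n K)
    (h : (∃ R : Matrix (Fin n) (Fin n) K, (∀ i j, j < i → R i j = 0) ∧
            (minpoly K R).natDegree = n ∧ Xof x * R = R * Xof x) ∨
         (∃ R : Matrix (Fin n) (Fin n) K, (∀ i j, j < i → R i j = 0) ∧
            (minpoly K R).natDegree = n ∧ Yof x * R = R * Yof x)) :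
    x ∈ CT0 n K := by
  rw [← ofPair_Xof_Yof x] at hx ⊢
  rcases h with ⟨R, hRu, hRreg, hXR⟩ | ⟨R, hRu, hRreg, hYR⟩
  · obtain ⟨hX, hY⟩ := ofPair_mem_CTset_iff.mp hx
    exact closure_minimal (fun y hy => mem_CT0_of_regular_snd hy.1 hy.2.2) isClosed_closure
      (ofPair_mem_closure_regular_snd hX hY (mem_upperCentralizer.mpr ⟨hRu, hXR⟩) hRreg)
  · obtain ⟨hY, hX⟩ := ofPair_mem_CTset_iff'.mp hx
    exact closure_minimal (fun y hy => mem_CT0_of_regular_fst hy.1 hy.2.2) isClosed_closure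
      (ofPair_mem_closure_regular_fst hY hX (mem_upperCentralizer.mpr ⟨hRu, hYR⟩) hRreg)
end

section
/- Every irreducible component of CT_n is stable under the action of the group K² given by (x,y)·(X,Y) = (X + xI_n, Y + yI_n), and consequently the set of pairs (X,Y) with both X and Y invertible is dense in every irreducible component of CT_n. -/
open Matrix Polynomial

/-- Encode a pair of matrices as a point. -/
def enc {n : ℕ} {K : Type*} (X Y : Matrix (Fin n) (Fin n) K) : Pt n K :=
  fun s => Sum.elim (fun p => X p.1 p.2) (fun p => Y p.1 p.2) s

/-- The translation action of `K²` on pairs: `(x,y)·(X,Y) = (X + xI, Y + yI)`. -/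
def tr {n : ℕ} {K : Type*} [CommRing K] (a b : K) (x : Pt n K) : Pt n K :=
  enc (Xof x + a • (1 : Matrix (Fin n) (Fin n) K)) (Yof x + b • (1 : Matrix (Fin n) (Fin n) K))

/-!
The Zariski topology on pairs of matrices is induced from the prime spectrum of a polynomial
ring, so it is Noetherian and `CT_n` has finitely many irreducible components. Translations are
homeomorphisms of `CT_n` and therefore permute these components. Along a line `t ↦ (t a, t b)`
the orbit of a point is polynomial in `t`, so for a component `s` and any component `c` the
parameters `t` moving `s` into `c` form a closed subset of `K` with its cofinite topology, an
irreducible space. Finitely many of these closed sets cover `K`, so one of them is all of `K`,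
and `t = 0` shows that its component is `s` itself.

Every matrix over an infinite field has an invertible translate, so `s` meets the open set of
pairs of invertible matrices, which is then dense in the irreducible `s`.
-/

theorem image_subset_of_mem_irreducibleComponents {T X : Type*} [TopologicalSpace T]
    [IrreducibleSpace T] [TopologicalSpace X] (hfin : (irreducibleComponents X).Finite)
    (f : T → X ≃ₜ X) (hf : ∀ x, Continuous fun t => f t x) {t₀ : T}
    (ht₀ : ∀ x, f t₀ x = x)
    {s : Set X} (hs : s ∈ irreducibleComponents X) (t : T) : f t '' s ⊆ s := by
  have himage : ∀ t, f t '' s ∈ irreducibleComponents X := fun t => by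
    rw [Homeomorph.image_eq_preimage_symm]
    exact preimage_mem_irreducibleComponents hs (f t).symm.isOpenEmbedding
      (by simpa using hs.1.nonempty)
  set S : Set X → Set T := fun c => {t | f t '' s ⊆ c}
  have hclosed : ∀ c ∈ irreducibleComponents X, IsClosed (S c) := fun c hc => by
    have hS : S c = ⋂ x ∈ s, (fun t => f t x) ⁻¹' c := by
      ext t; simp [S, Set.subset_def]
    rw [hS]
    exact isClosed_biInter fun x _ => (isClosed_of_mem_irreducibleComponents c hc).preimage (hf x)
  obtain ⟨_, hz, hcover⟩ := isIrreducible_iff_sUnion_isClosed.mp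
    (IrreducibleSpace.isIrreducible_univ T) (hfin.toFinset.image S)
    (by simpa using hclosed) (fun t _ => by simpa using ⟨_, himage t, Set.Subset.refl _⟩)
  obtain ⟨c, hc, rfl⟩ := Finset.mem_image.mp hz
  rw [Set.Finite.mem_toFinset] at hc
  have hsc : s ⊆ c := fun x hx => hcover (Set.mem_univ t₀) ⟨x, hx, ht₀ x⟩
  exact (hcover (Set.mem_univ t)).trans (hs.2 hc.1 hsc)

theorem Matrix.exists_isUnit_add_smul_one {m K : Type*} [Fintype m] [DecidableEq m] [Field K]
    [Infinite K] (M : Matrix m m K) : ∃ a : K, IsUnit (M + a • 1) := by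
  obtain ⟨a, ha⟩ := (Matrix.finite_spectrum (-M)).infinite_compl.nonempty
  refine ⟨a, ?_⟩
  simpa [Algebra.algebraMap_eq_smul_one, add_comm] using spectrum.notMem_iff.mp ha

section

variable {n : ℕ} {K : Type*}

section Zariski

lemma isOpen_setOf_eval_ne_zero [CommRing K]
    (p : MvPolynomial ((Fin n × Fin n) ⊕ (Fin n × Fin n)) K) :
    IsOpen {x : Pt n K | MvPolynomial.eval x p ≠ 0} :=
  TopologicalSpace.isOpen_generateFrom_of_mem ⟨p, rfl⟩

lemma continuous_of_isOpen_setOf_eval_ne_zero [CommRing K] {Y : Type*} [TopologicalSpace Y]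
    {g : Y → Pt n K} (h : ∀ p, IsOpen {y | MvPolynomial.eval (g y) p ≠ 0}) : Continuous g :=
  continuous_generateFrom_iff.mpr <| by rintro _ ⟨p, rfl⟩; exact h p

lemma continuous_eval_mvPolynomial [CommRing K]
    (P : (Fin n × Fin n) ⊕ (Fin n × Fin n) →
      MvPolynomial ((Fin n × Fin n) ⊕ (Fin n × Fin n)) K) :
    Continuous fun (x : Pt n K) c => MvPolynomial.eval x (P c) :=
  continuous_of_isOpen_setOf_eval_ne_zero fun p => by
    simpa only [MvPolynomial.eval, ← MvPolynomial.eval₂Hom_bind₁]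
      using isOpen_setOf_eval_ne_zero (MvPolynomial.bind₁ P p)

lemma continuous_eval_polynomial [CommRing K] [IsDomain K]
    (P : (Fin n × Fin n) ⊕ (Fin n × Fin n) → K[X]) :
    Continuous fun (t : CofiniteTopology K) c => (P c).eval (CofiniteTopology.of.symm t) :=
  continuous_of_isOpen_setOf_eval_ne_zero fun p => by
    set q : K[X] := MvPolynomial.aeval P p
    have hq : ∀ t : K, MvPolynomial.eval (fun c => (P c).eval t) p = q.eval t := by
      intro t
      simp only [q, ← Polynomial.coe_aeval_eq_eval, MvPolynomial.comp_aeval_apply,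
        ← MvPolynomial.coe_aeval_eq_eval]
      rfl
    simp only [hq]
    rw [CofiniteTopology.isOpen_iff]
    rintro ⟨t, ht⟩
    have hq0 : q ≠ 0 := fun h => ht (by simp [h])
    simpa [Set.compl_ofPred] using (Polynomial.finite_setOfPred_isRoot hq0).preimage
      CofiniteTopology.of.symm.injective.injOn

end Zariski

section Noetherian

variable [CommRing K] [IsDomain K]

noncomputable def pointSpec (x : Pt n K) :
    PrimeSpectrum (MvPolynomial ((Fin n × Fin n) ⊕ (Fin n × Fin n)) K) :=
  ⟨RingHom.ker (MvPolynomial.eval x), RingHom.ker_isPrime _⟩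

lemma preimage_pointSpec_basicOpen (p : MvPolynomial ((Fin n × Fin n) ⊕ (Fin n × Fin n)) K) :
    pointSpec ⁻¹' PrimeSpectrum.basicOpen p = {x : Pt n K | MvPolynomial.eval x p ≠ 0} := by
  ext x
  simp [pointSpec, RingHom.mem_ker]

lemma isInducing_pointSpec : Topology.IsInducing (pointSpec (n := n) (K := K)) where
  eq_induced := by
    show TopologicalSpace.generateFrom _ = _
    rw [PrimeSpectrum.isTopologicalBasis_basic_opens.eq_generateFrom, induced_generateFrom_eq,
      ← Set.range_comp]
    congr 1
    ext U
    simp only [Set.mem_ofPred_eq, Set.mem_range, Function.comp_apply, preimage_pointSpec_basicOpen]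
    exact exists_congr fun _ => eq_comm

instance [IsNoetherianRing K] : TopologicalSpace.NoetherianSpace (Pt n K) :=
  isInducing_pointSpec.noetherianSpace

end Noetherian

section Translation

variable [CommRing K]

lemma tr_eq_add (a b : K) (x : Pt n K) : tr a b x = x + tr a b 0 := by
  funext c; rcases c with ⟨i, j⟩ | ⟨i, j⟩ <;> simp [tr, enc, Xof, Yof]

lemma tr_mul_zero (t a b : K) : tr (t * a) (t * b) (0 : Pt n K) = t • tr a b 0 := by
  funext c; rcases c with ⟨i, j⟩ | ⟨i, j⟩ <;> simp [tr, enc, Xof, Yof, mul_smul]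

lemma tr_tr (a b c d : K) (x : Pt n K) : tr a b (tr c d x) = tr (a + c) (b + d) x := by
  funext e; rcases e with ⟨i, j⟩ | ⟨i, j⟩ <;> simp [tr, enc, Xof, Yof] <;> ring

lemma tr_zero_zero (x : Pt n K) : tr 0 0 x = x := by
  funext e; rcases e with ⟨i, j⟩ | ⟨i, j⟩ <;> simp [tr, enc, Xof, Yof]

lemma Xof_tr (a b : K) (x : Pt n K) : Xof (tr a b x) = Xof x + a • 1 := rfl

lemma Yof_tr (a b : K) (x : Pt n K) : Yof (tr a b x) = Yof x + b • 1 := rfl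

lemma tr_mem_CTset {a b : K} {x : Pt n K} (hx : x ∈ CTset n K) : tr a b x ∈ CTset n K := by
  obtain ⟨hX, hY, hXY⟩ := hx
  refine ⟨fun i j hij => ?_, fun i j hij => ?_, ?_⟩
  · simp [Xof_tr, hij.ne', hX i j hij]
  · simp [Yof_tr, hij.ne', hY i j hij]
  · simp only [Xof_tr, Yof_tr, add_mul, mul_add, Matrix.smul_mul, Matrix.mul_smul, one_mul,
      mul_one, hXY, smul_smul, mul_comm a b]
    abel

lemma continuous_tr (a b : K) : Continuous (tr a b : Pt n K → Pt n K) := by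
  convert continuous_eval_mvPolynomial fun c => MvPolynomial.X c + MvPolynomial.C (tr a b 0 c)
    using 1
  funext x c
  simp [tr_eq_add a b x]

lemma continuous_tr_mul [IsDomain K] (a b : K) (x : Pt n K) :
    Continuous fun t : CofiniteTopology K =>
      tr (CofiniteTopology.of.symm t * a) (CofiniteTopology.of.symm t * b) x := by
  convert continuous_eval_polynomial fun c => C (x c) + X * C (tr a b 0 c) using 1
  funext t c
  simp only [tr_eq_add _ _ x, tr_mul_zero, Pi.add_apply, Pi.smul_apply, smul_eq_mul, eval_add,
    eval_C, eval_mul, eval_X]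

def trHomeomorph (a b : K) : CTset n K ≃ₜ CTset n K where
  toFun x := ⟨tr a b x, tr_mem_CTset x.2⟩
  invFun x := ⟨tr (-a) (-b) x, tr_mem_CTset x.2⟩
  left_inv x := Subtype.ext <| by simp [tr_tr, tr_zero_zero]
  right_inv x := Subtype.ext <| by simp [tr_tr, tr_zero_zero]
  continuous_toFun := ((continuous_tr a b).comp continuous_subtype_val).subtype_mk _
  continuous_invFun := ((continuous_tr (-a) (-b)).comp continuous_subtype_val).subtype_mk _

@[simp]
lemma coe_trHomeomorph (a b : K) (x : CTset n K) : (trHomeomorph a b x : Pt n K) = tr a b x :=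
  rfl

end Translation

theorem trHomeomorph_mem_of_mem_irreducibleComponents [CommRing K] [IsDomain K]
    [IsNoetherianRing K] [Infinite K] {s : Set (CTset n K)}
    (hs : s ∈ irreducibleComponents (CTset n K)) (a b : K) {x : CTset n K} (hx : x ∈ s) :
    trHomeomorph a b x ∈ s :=
  image_subset_of_mem_irreducibleComponents
    TopologicalSpace.NoetherianSpace.finite_irreducibleComponents
    (fun t => trHomeomorph (CofiniteTopology.of.symm t * a) (CofiniteTopology.of.symm t * b))
    (fun x => (continuous_tr_mul a b x.1).subtype_mk _) (t₀ := CofiniteTopology.of 0)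
    (fun x => Subtype.ext <| by simp [tr_zero_zero]) hs (CofiniteTopology.of 1)
    ⟨x, hx, by simp⟩

lemma det_Xof [CommRing K] (x : Pt n K) : (Xof x).det =
    MvPolynomial.eval x (Matrix.of fun i j => MvPolynomial.X (Sum.inl (i, j))).det := by
  rw [RingHom.map_det]; congr; ext; simp [Xof]

lemma det_Yof [CommRing K] (x : Pt n K) : (Yof x).det =
    MvPolynomial.eval x (Matrix.of fun i j => MvPolynomial.X (Sum.inr (i, j))).det := by
  rw [RingHom.map_det]; congr; ext; simp [Yof]

lemma isOpen_setOf_isUnit_Xof_and_isUnit_Yof [Field K] :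
    IsOpen {x : Pt n K | IsUnit (Xof x) ∧ IsUnit (Yof x)} := by
  simp only [Matrix.isUnit_iff_isUnit_det, isUnit_iff_ne_zero, det_Xof, det_Yof]
  exact (isOpen_setOf_eval_ne_zero _).inter (isOpen_setOf_eval_ne_zero _)

end

/-- Every irreducible component of `CT_n` is stable under the translation action of `K²`,
and the pairs of invertible matrices are dense in each irreducible component. -/
theorem stmt7 (n : ℕ) (K : Type*) [Field K] [IsAlgClosed K] :
    ∀ s ∈ irreducibleComponents ↥(CTset n K),
      (∀ a b : K, (fun x => tr a b x) '' (Subtype.val '' s) ⊆ Subtype.val '' s) ∧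
      Subtype.val '' s ⊆
        closure ((Subtype.val '' s) ∩ {x : Pt n K | IsUnit (Xof x) ∧ IsUnit (Yof x)}) := by
  intro s hs
  have hstab := fun a b x (hx : x ∈ s) => trHomeomorph_mem_of_mem_irreducibleComponents hs a b hx
  refine ⟨?_, ?_⟩
  · rintro a b _ ⟨_, ⟨x, hx, rfl⟩, rfl⟩
    exact ⟨_, hstab a b x hx, rfl⟩
  · obtain ⟨x, hx⟩ := hs.1.nonempty
    obtain ⟨a, ha⟩ := (Xof x.1).exists_isUnit_add_smul_one
    obtain ⟨b, hb⟩ := (Yof x.1).exists_isUnit_add_smul_one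
    exact subset_closure_inter_of_isPreirreducible_of_isOpen
      (hs.1.image _ continuous_subtype_val.continuousOn).isPreirreducible
      isOpen_setOf_isUnit_Xof_and_isUnit_Yof ⟨tr a b x, ⟨_, hstab a b x hx, rfl⟩, ha, hb⟩
end

section
/- Let (X,Y) be a pair of commuting n×n upper triangular matrices, with X having eigenvalues λ_1,...,λ_r and minimal polynomial ∏(t-λ_i)^{m_i}. Then there exist an invertible upper triangular matrix G and a partition {E_1,...,E_r} of the basis {Ge_1,...,Ge_n} such that ker (X-λ_i I_n)^{m_i} = span(E_i) and span(E_i) is stable under both X and Y for each i. -/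
/-!
The spectral projections `π i` of `X` are polynomials in `X` (Chinese remainder theorem for the
coprime factors of the minimal polynomial), so they are upper triangular, commute with `Y`, and
`range (π i) = ker (X - λᵢ)^{mᵢ}`. Since the diagonal of a product of upper triangular matrices is
the product of the diagonals, the diagonals of the `π i` are complete orthogonal idempotents of
`Kⁿ`: indicator functions `dᵢ` of a partition `{Eᵢ}` of the indices. With `Dᵢ = diagonal dᵢ`, the
matrix `G = ∑ π i * Dᵢ` is upper triangular with unit diagonal and `G * Dᵢ = π i * G`, so the
columns of `G` indexed by `Eᵢ` span `range (G * Dᵢ) = range (π i * G) = range (π i)`.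
-/

open Matrix Polynomial Function

theorem exists_sum_eq_one_and_prod_dvd {R ι : Type*} [CommSemiring R] [Fintype ι] [Nonempty ι]
    [DecidableEq ι] {p : ι → R} (hp : Pairwise (IsCoprime on p)) :
    ∃ q : ι → R, ∑ i, q i = 1 ∧ (∀ i, ∏ j, p j ∣ p i * q i) ∧ ∀ i j, i ≠ j → p i ∣ q j := by
  obtain ⟨μ, hμ⟩ := exists_sum_eq_one_iff_pairwise_coprime'.mpr hp
  refine ⟨fun i => μ i * ∏ j ∈ {i}ᶜ, p j, hμ, fun i => ⟨μ i, ?_⟩, fun i j hij => ?_⟩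
  · rw [Fintype.prod_eq_mul_prod_compl i]
    ring
  · exact (Finset.dvd_prod_of_mem p (by simpa using hij)).mul_left _

theorem exists_completeOrthogonalIdempotents_aeval {R A ι : Type*} [CommSemiring R] [Semiring A]
    [Algebra R A] [Fintype ι] [DecidableEq ι] (x : A) {p : ι → R[X]}
    (hp : Pairwise (IsCoprime on p)) (hx : aeval x (∏ i, p i) = 0) :
    ∃ π : ι → A, CompleteOrthogonalIdempotents π ∧ (∀ i, π i ∈ Algebra.adjoin R {x}) ∧
      (∀ i, aeval x (p i) * π i = 0) ∧ ∀ i j, i ≠ j → ∃ c, π j = c * aeval x (p i) := by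
  cases isEmpty_or_nonempty ι
  · -- with no factors, `hx` reads `1 = 0` in `A`
    have : Subsingleton A := subsingleton_of_zero_eq_one (by simpa using hx.symm)
    exact ⟨0, .of_subsingleton, fun _ => Subalgebra.zero_mem _,
      fun _ => Subsingleton.elim _ _, fun _ _ _ => ⟨0, Subsingleton.elim _ _⟩⟩
  obtain ⟨q, hq, hpq, hdvd⟩ := exists_sum_eq_one_and_prod_dvd hp
  have hvanish : ∀ s, ∏ i, p i ∣ s → aeval x s = 0 := fun s ⟨c, hc⟩ => by
    rw [hc, map_mul, hx, zero_mul]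
  refine ⟨fun i => aeval x (q i), ?_, fun i => aeval_mem_adjoin_singleton R x,
    fun i => by rw [← map_mul, hvanish _ (hpq i)], fun i j hij => ?_⟩
  · refine CompleteOrthogonalIdempotents.iff_ortho_complete.mpr ⟨fun i j hij => ?_, ?_⟩
    · show _ = 0
      rw [← map_mul, hvanish]
      exact (hpq i).trans (mul_comm (q i) (q j) ▸ mul_dvd_mul_right (hdvd i j hij) _)
    · rw [← map_sum, hq, map_one]
  · obtain ⟨c, hc⟩ := hdvd i j hij
    exact ⟨aeval x c, show aeval x (q j) = _ by rw [hc, mul_comm, map_mul]⟩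

theorem Matrix.range_mulVecLin_eq_ker_of_sum_eq_one {R m ι : Type*} [CommSemiring R] [Fintype m]
    [DecidableEq m] [Fintype ι] {π P : ι → Matrix m m R} (hπ : ∑ i, π i = 1)
    (hP : ∀ i, P i * π i = 0) (hπP : ∀ i j, i ≠ j → ∃ c, π j = c * P i) (i : ι) :
    LinearMap.range (π i).mulVecLin = LinearMap.ker (P i).mulVecLin := by
  apply le_antisymm
  · rintro _ ⟨v, rfl⟩
    simp [mulVec_mulVec, hP]
  · intro v hv
    rw [LinearMap.mem_ker, mulVecLin_apply] at hv
    have hkill : ∀ j ≠ i, π j *ᵥ v = 0 := fun j hj => by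
      obtain ⟨c, hc⟩ := hπP i j (Ne.symm hj)
      rw [hc, ← mulVec_mulVec, hv, mulVec_zero]
    refine ⟨v, ?_⟩
    calc π i *ᵥ v = ∑ j, π j *ᵥ v := (Finset.sum_eq_single i (fun j _ hj => hkill j hj)
          (by simp)).symm
      _ = v := by rw [← Matrix.sum_mulVec, hπ, one_mulVec]

theorem Matrix.mulVec_mem_range_of_commute {R m : Type*} [CommSemiring R] [Fintype m]
    {A B : Matrix m m R} (h : Commute A B) {v : m → R} (hv : v ∈ LinearMap.range B.mulVecLin) :
    A *ᵥ v ∈ LinearMap.range B.mulVecLin := by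
  obtain ⟨w, rfl⟩ := hv
  exact ⟨A *ᵥ w, by simp [mulVec_mulVec, h.eq]⟩

theorem Matrix.IsUpperTriangular.diag_mul {R m : Type*} [NonUnitalNonAssocSemiring R] [Fintype m]
    [LinearOrder m] {M N : Matrix m m R} (hM : M.IsUpperTriangular) (hN : N.IsUpperTriangular) :
    (M * N).diag = M.diag * N.diag := by
  funext i
  refine (Finset.sum_eq_single i (fun k _ hki => ?_) (by simp)).trans rfl
  rcases hki.lt_or_gt with hk | hk
  · exact mul_eq_zero_of_left (hM hk) _
  · exact mul_eq_zero_of_right _ (hN hk)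

theorem CompleteOrthogonalIdempotents.diag {R m ι : Type*} [Semiring R] [Fintype m]
    [DecidableEq m] [LinearOrder m] [Fintype ι] {π : ι → Matrix m m R}
    (hπ : CompleteOrthogonalIdempotents π)
    (hU : ∀ i, (π i).IsUpperTriangular) : CompleteOrthogonalIdempotents fun i => (π i).diag := by
  refine CompleteOrthogonalIdempotents.iff_ortho_complete.mpr ⟨fun i j hij => ?_, ?_⟩
  · show _ = 0
    rw [← (hU i).diag_mul (hU j), hπ.ortho hij, diag_zero]
  · rw [← diag_sum, hπ.complete, diag_one]

theorem CompleteOrthogonalIdempotents.existsUnique_ne_zero {R ι : Type*} [Semiring R]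
    [NoZeroDivisors R] [Nontrivial R] [Fintype ι] {e : ι → R}
    (he : CompleteOrthogonalIdempotents e) : ∃! i, e i ≠ 0 := by
  obtain ⟨i, -, hi⟩ := Finset.exists_ne_zero_of_sum_ne_zero (he.complete ▸ one_ne_zero)
  refine ⟨i, hi, fun j hj => by_contra fun hji => ?_⟩
  exact mul_ne_zero hj hi (he.ortho hji)

theorem OrthogonalIdempotents.sum_mul_mul_eq_mul_sum {A ι : Type*} [Semiring A] [Fintype ι]
    [DecidableEq ι] {e f : ι → A} (he : OrthogonalIdempotents e) (hf : OrthogonalIdempotents f)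
    (i : ι) : (∑ j, e j * f j) * f i = e i * ∑ j, e j * f j := by
  simp only [Finset.sum_mul, Finset.mul_sum, mul_assoc, hf.mul_eq, ← mul_assoc (e i), he.mul_eq]
  simp

theorem Matrix.range_mulVecLin_mul_diagonal {K m n : Type*} [Field K] [Fintype n] [DecidableEq n]
    (A : Matrix m n K) (w : n → K) :
    LinearMap.range (A * diagonal w).mulVecLin =
      Submodule.span K ((fun l => A *ᵥ Pi.single l 1) '' {l | w l ≠ 0}) := by
  have hcol : ∀ l, (A * diagonal w).col l = w l • A *ᵥ Pi.single l 1 := fun l => by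
    ext k
    simp [mul_diagonal, mul_comm]
  rw [range_mulVecLin]
  apply le_antisymm <;> rw [Submodule.span_le]
  · rintro _ ⟨l, rfl⟩
    rw [SetLike.mem_coe, hcol]
    by_cases hl : w l = 0
    · simp [hl]
    · exact Submodule.smul_mem _ _ (Submodule.subset_span ⟨l, hl, rfl⟩)
  · rintro _ ⟨l, hl, rfl⟩
    change A *ᵥ Pi.single l 1 ∈ _
    rw [← inv_smul_smul₀ hl (A *ᵥ Pi.single l 1), ← hcol]
    exact Submodule.smul_mem _ _ (Submodule.subset_span ⟨l, rfl⟩)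

theorem exists_upperTriangular_unit_intertwining_diag {R m ι : Type*} [CommRing R] [Fintype m]
    [DecidableEq m] [LinearOrder m] [Fintype ι] {π : ι → Matrix m m R}
    (hπ : CompleteOrthogonalIdempotents π) (hU : ∀ i, (π i).IsUpperTriangular) :
    ∃ G : (Matrix m m R)ˣ, (G : Matrix m m R).IsUpperTriangular ∧
      ∀ i, (G : Matrix m m R) * diagonal (π i).diag = π i * G := by
  classical
  have hd := hπ.diag hU
  set G := ∑ i, π i * diagonal (π i).diag
  have hGU : G.IsUpperTriangular := Subalgebra.sum_mem (blockTriangularSubalgebra R R id)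
    fun i _ => Subalgebra.mul_mem _ (hU i) (blockTriangular_diagonal _)
  have hGdiag : G.diag = 1 := by
    simp_rw [G, diag_sum, (hU _).diag_mul (blockTriangular_diagonal _), diag_diagonal,
      (hd.idem _).eq]
    exact hd.complete
  have hG : IsUnit G := by
    have hdet : G.det = 1 := by
      rw [det_of_isUpperTriangular hGU]
      exact Finset.prod_eq_one fun i _ => congrFun hGdiag i
    rw [isUnit_iff_isUnit_det, hdet]
    exact isUnit_one
  exact ⟨hG.unit, hGU,
    hπ.sum_mul_mul_eq_mul_sum (hd.map (diagonalRingHom m R)).toOrthogonalIdempotents⟩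

theorem exists_upperTriangular_basis_partition_span_eq_range {K m ι : Type*} [Field K] [Fintype m]
    [DecidableEq m] [LinearOrder m] [Fintype ι] {π : ι → Matrix m m K}
    (hπ : CompleteOrthogonalIdempotents π) (hU : ∀ i, (π i).IsUpperTriangular) :
    ∃ G : (Matrix m m K)ˣ, (G : Matrix m m K).IsUpperTriangular ∧ ∃ E : ι → Finset m,
      Pairwise (Disjoint on E) ∧ Finset.univ.biUnion E = Finset.univ ∧
      ∀ i, Submodule.span K ((fun l => (G : Matrix m m K) *ᵥ Pi.single l 1) '' E i) =
        LinearMap.range (π i).mulVecLin := by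
  classical
  obtain ⟨G, hGU, hGπ⟩ := exists_upperTriangular_unit_intertwining_diag hπ hU
  have hunique : ∀ l, ∃! i, (π i).diag l ≠ 0 := fun l =>
    ((hπ.diag hU).map (Pi.evalRingHom (fun _ : m => K) l)).existsUnique_ne_zero
  refine ⟨G, hGU, fun i => Finset.univ.filter fun l => (π i).diag l ≠ 0, fun i j hij => ?_,
    ?_, fun i => ?_⟩
  · exact Finset.disjoint_filter.2 fun l _ hi hj => hij ((hunique l).unique hi hj)
  · refine Finset.eq_univ_of_forall fun l => ?_
    obtain ⟨i, hi, -⟩ := hunique l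
    exact Finset.mem_biUnion.2 ⟨i, Finset.mem_univ _, Finset.mem_filter.2 ⟨Finset.mem_univ _, hi⟩⟩
  · have hsurj : LinearMap.range (G : Matrix m m K).mulVecLin = ⊤ :=
      LinearMap.range_eq_top.2 fun v => ⟨(↑G⁻¹ : Matrix m m K) *ᵥ v, by simp [mulVec_mulVec]⟩
    rw [Finset.coe_filter_univ, ← range_mulVecLin_mul_diagonal, hGπ, mulVecLin_mul,
      LinearMap.range_comp_of_range_eq_top _ hsurj]

theorem stmt11_general {K : Type*} [Field K] {n r : ℕ}
    (X Y : Matrix (Fin n) (Fin n) K)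
    (hX : ∀ i j, j < i → X i j = 0)
    (hcomm : X * Y = Y * X)
    (lam : Fin r → K) (hlam : Function.Injective lam)
    (m : Fin r → ℕ)
    (hmin : minpoly K X = ∏ i, (Polynomial.X - Polynomial.C (lam i)) ^ m i) :
    ∃ G : (Matrix (Fin n) (Fin n) K)ˣ,
      (∀ i j, j < i → (G : Matrix (Fin n) (Fin n) K) i j = 0) ∧
      ∃ E : Fin r → Finset (Fin n),
        (∀ i j, i ≠ j → Disjoint (E i) (E j)) ∧
        (Finset.univ.biUnion E = Finset.univ) ∧
        ∀ i,
          Submodule.span K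
              ((fun l => (G : Matrix (Fin n) (Fin n) K).mulVec (Pi.single l 1)) '' (E i)) =
            LinearMap.ker ((X - lam i • (1 : Matrix (Fin n) (Fin n) K)) ^ m i).mulVecLin ∧
          (∀ v ∈ Submodule.span K
              ((fun l => (G : Matrix (Fin n) (Fin n) K).mulVec (Pi.single l 1)) '' (E i)),
            X.mulVec v ∈ Submodule.span K
              ((fun l => (G : Matrix (Fin n) (Fin n) K).mulVec (Pi.single l 1)) '' (E i)) ∧
            Y.mulVec v ∈ Submodule.span K
              ((fun l => (G : Matrix (Fin n) (Fin n) K).mulVec (Pi.single l 1)) '' (E i))) := by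
  have hp : Pairwise (IsCoprime on fun i => (Polynomial.X - C (lam i)) ^ m i) :=
    fun i j hij => (pairwise_coprime_X_sub_C hlam hij).pow
  obtain ⟨π, hπ, hπX, hPπ, hπP⟩ :=
    exists_completeOrthogonalIdempotents_aeval X hp (by rw [← hmin, minpoly.aeval])
  have hU : ∀ i, (π i).IsUpperTriangular := fun i =>
    Algebra.adjoin_le (R := K) (S := blockTriangularSubalgebra K K id)
      (Set.singleton_subset_iff.2 fun a b h => hX a b h) (hπX i)
  obtain ⟨G, hGU, E, hdisj, hcover, hspan⟩ :=
    exists_upperTriangular_basis_partition_span_eq_range hπ hU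
  have hker : ∀ i, LinearMap.range (π i).mulVecLin =
      LinearMap.ker ((X - lam i • (1 : Matrix (Fin n) (Fin n) K)) ^ m i).mulVecLin := fun i => by
    rw [range_mulVecLin_eq_ker_of_sum_eq_one hπ.complete hPπ hπP]
    simp [Algebra.algebraMap_eq_smul_one]
  refine ⟨G, fun a b h => hGU h, E, fun i j hij => hdisj hij, hcover, fun i =>
    ⟨(hspan i).trans (hker i), fun v hv => ?_⟩⟩
  rw [hspan i] at hv ⊢
  exact ⟨mulVec_mem_range_of_commute (Algebra.commute_of_mem_adjoin_self (hπX i)) hv,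
    mulVec_mem_range_of_commute
      (Algebra.commute_of_mem_adjoin_singleton_of_commute (hπX i) hcomm.symm) hv⟩

/-- For a commuting pair `(X,Y)` of upper triangular matrices, with `X` having minimal
polynomial `∏ (t - λ_i)^{m_i}`, there are an invertible upper triangular `G` and a
partition `{E_1,…,E_r}` of the basis `{Ge_1,…,Ge_n}` such that
`ker (X - λ_i I)^{m_i} = span E_i` and each `span E_i` is stable under `X` and `Y`. -/
theorem stmt11 {K : Type*} [Field K] [IsAlgClosed K] {n r : ℕ}
    (X Y : Matrix (Fin n) (Fin n) K)
    (hX : ∀ i j, j < i → X i j = 0) (hY : ∀ i j, j < i → Y i j = 0)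
    (hcomm : X * Y = Y * X)
    (lam : Fin r → K) (hlam : Function.Injective lam)
    (m : Fin r → ℕ) (hm : ∀ i, 1 ≤ m i)
    (hmin : minpoly K X = ∏ i, (Polynomial.X - Polynomial.C (lam i)) ^ m i) :
    ∃ G : (Matrix (Fin n) (Fin n) K)ˣ,
      (∀ i j, j < i → (G : Matrix (Fin n) (Fin n) K) i j = 0) ∧
      ∃ E : Fin r → Finset (Fin n),
        (∀ i j, i ≠ j → Disjoint (E i) (E j)) ∧
        (Finset.univ.biUnion E = Finset.univ) ∧
        ∀ i,
          Submodule.span K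
              ((fun l => (G : Matrix (Fin n) (Fin n) K).mulVec (Pi.single l 1)) '' (E i)) =
            LinearMap.ker ((X - lam i • (1 : Matrix (Fin n) (Fin n) K)) ^ m i).mulVecLin ∧
          (∀ v ∈ Submodule.span K
              ((fun l => (G : Matrix (Fin n) (Fin n) K).mulVec (Pi.single l 1)) '' (E i)),
            X.mulVec v ∈ Submodule.span K
              ((fun l => (G : Matrix (Fin n) (Fin n) K).mulVec (Pi.single l 1)) '' (E i)) ∧
            Y.mulVec v ∈ Submodule.span K
              ((fun l => (G : Matrix (Fin n) (Fin n) K).mulVec (Pi.single l 1)) '' (E i))) :=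
  stmt11_general X Y hX hcomm lam hlam m hmin
end

section
/- If in the orbit of a nonzero strictly upper triangular n×n matrix X under conjugation by invertible upper triangular matrices the (h,k) entry vanishes identically, then the (i,j) entries vanish identically on that orbit for all h ≤ i, j ≤ k. -/
/-!
Conjugating by the upper triangular transvection `1 + c E_{jk}` (`j < k`) subtracts `c` times
column `j` from column `k`, and conjugating by `1 + c E_{hi}` (`h < i`) adds `c` times row `i`
to row `h`. Since the orbit of a strictly upper triangular matrix stays strictly upper
triangular, a nonzero `(i, j)` entry on the orbit forces `i < j`; a suitable `c` then pushes it
first to a nonzero `(i, k)` entry and then to a nonzero `(h, k)` entry.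
-/

open Matrix

theorem exists_add_mul_ne_zero {K : Type*} [Field K] (x : K) {y : K} (hy : y ≠ 0) :
    ∃ c, x + c * y ≠ 0 :=
  ⟨(1 - x) / y, by rw [div_mul_cancel₀ _ hy, add_sub_cancel]; exact one_ne_zero⟩

namespace Matrix

variable {ι R K : Type*} [Fintype ι] [LinearOrder ι] [CommRing R] [Field K]

variable (ι R) in
def upperTriangularUnits : Subgroup (Matrix ι ι R)ˣ where
  carrier := {G | (G : Matrix ι ι R).IsUpperTriangular}
  mul_mem' hG hH := hG.mul hH
  one_mem' := blockTriangular_one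
  inv_mem' {G} hG := by
    have := G.invertible
    rw [Set.mem_ofPred_eq, coe_units_inv]
    exact blockTriangular_inv_of_blockTriangular hG

theorem conj_apply_eq_zero_of_le {X : Matrix ι ι R} (hX : ∀ i j, j ≤ i → X i j = 0)
    {G : (Matrix ι ι R)ˣ} (hG : G ∈ upperTriangularUnits ι R) {i j : ι} (hji : j ≤ i) :
    ((G : Matrix ι ι R) * X * (↑G⁻¹ : Matrix ι ι R)) i j = 0 := by
  have hG' : (↑G⁻¹ : Matrix ι ι R).IsUpperTriangular := inv_mem hG
  rw [mul_apply]
  refine Finset.sum_eq_zero fun b _ => ?_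
  rcases le_or_gt b j with hbj | hjb
  · rw [mul_apply, Finset.sum_mul]
    refine Finset.sum_eq_zero fun a _ => ?_
    rcases lt_or_ge a i with hai | hia
    · rw [hG hai, zero_mul, zero_mul]
    · rw [hX a b (hbj.trans (hji.trans hia)), mul_zero, zero_mul]
  · rw [hG' hjb, mul_zero]

def transvectionUnit {p q : ι} (hpq : p ≠ q) (c : R) : (Matrix ι ι R)ˣ where
  val := transvection p q c
  inv := transvection p q (-c)
  val_inv := by rw [transvection_mul_transvection_same _ _ hpq, add_neg_cancel, transvection_zero]
  inv_val := by rw [transvection_mul_transvection_same _ _ hpq, neg_add_cancel, transvection_zero]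

theorem transvectionUnit_mem_upperTriangularUnits {p q : ι} (hpq : p < q) (c : R) :
    transvectionUnit hpq.ne c ∈ upperTriangularUnits ι R :=
  blockTriangular_transvection hpq.le c

theorem transvectionUnit_conj_apply_of_ne_left {p q : ι} (hpq : p ≠ q) (c : R)
    (Y : Matrix ι ι R) {a : ι} (ha : a ≠ p) :
    ((transvectionUnit hpq c : Matrix ι ι R) * Y * (↑(transvectionUnit hpq c)⁻¹ : Matrix ι ι R))
      a q = Y a q - c * Y a p := by
  change (transvection p q c * Y * transvection p q (-c)) a q = _
  rw [mul_transvection_apply_same, transvection_mul_apply_of_ne _ _ _ _ ha,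
    transvection_mul_apply_of_ne _ _ _ _ ha, neg_mul, sub_eq_add_neg]

theorem transvectionUnit_conj_apply_of_ne_right {p q : ι} (hpq : p ≠ q) (c : R)
    (Y : Matrix ι ι R) {b : ι} (hb : b ≠ q) :
    ((transvectionUnit hpq c : Matrix ι ι R) * Y * (↑(transvectionUnit hpq c)⁻¹ : Matrix ι ι R))
      p b = Y p b + c * Y q b := by
  change (transvection p q c * Y * transvection p q (-c)) p b = _
  rw [mul_transvection_apply_of_ne _ _ _ _ hb, transvection_mul_apply_same]

theorem exists_conj_apply_ne_zero_of_le_right {Y : Matrix ι ι K} {i j k : ι} (hY : Y i j ≠ 0)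
    (hij : i ≠ j) (hjk : j ≤ k) : ∃ u ∈ upperTriangularUnits ι K,
      ((u : Matrix ι ι K) * Y * (↑u⁻¹ : Matrix ι ι K)) i k ≠ 0 := by
  rcases hjk.eq_or_lt with rfl | hjk
  · exact ⟨1, one_mem _, by simpa using hY⟩
  obtain ⟨c, hc⟩ := exists_add_mul_ne_zero (Y i k) hY
  refine ⟨transvectionUnit hjk.ne (-c), transvectionUnit_mem_upperTriangularUnits hjk _, ?_⟩
  rwa [transvectionUnit_conj_apply_of_ne_left _ _ _ hij, neg_mul, sub_neg_eq_add]

theorem exists_conj_apply_ne_zero_of_le_left {Y : Matrix ι ι K} {h i k : ι} (hY : Y i k ≠ 0)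
    (hik : i ≠ k) (hhi : h ≤ i) : ∃ u ∈ upperTriangularUnits ι K,
      ((u : Matrix ι ι K) * Y * (↑u⁻¹ : Matrix ι ι K)) h k ≠ 0 := by
  rcases hhi.eq_or_lt with rfl | hhi
  · exact ⟨1, one_mem _, by simpa using hY⟩
  obtain ⟨c, hc⟩ := exists_add_mul_ne_zero (Y h k) hY
  refine ⟨transvectionUnit hhi.ne c, transvectionUnit_mem_upperTriangularUnits hhi _, ?_⟩
  rwa [transvectionUnit_conj_apply_of_ne_right _ _ _ hik.symm]

theorem conj_apply_eq_zero_of_le_of_le {X : Matrix ι ι K} (hX : ∀ i j, j ≤ i → X i j = 0)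
    {h k : ι} (hvan : ∀ G ∈ upperTriangularUnits ι K,
      ((G : Matrix ι ι K) * X * (↑G⁻¹ : Matrix ι ι K)) h k = 0)
    {G : (Matrix ι ι K)ˣ} (hG : G ∈ upperTriangularUnits ι K) {i j : ι} (hhi : h ≤ i)
    (hjk : j ≤ k) : ((G : Matrix ι ι K) * X * (↑G⁻¹ : Matrix ι ι K)) i j = 0 := by
  by_contra hY
  have hij : i < j := lt_of_not_ge fun hji => hY (conj_apply_eq_zero_of_le hX hG hji)
  obtain ⟨u, hu, hZ⟩ := exists_conj_apply_ne_zero_of_le_right hY hij.ne hjk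
  obtain ⟨v, hv, hW⟩ := exists_conj_apply_ne_zero_of_le_left hZ (hij.trans_le hjk).ne hhi
  apply hW
  simpa only [_root_.mul_inv_rev, Units.val_mul, mul_assoc] using
    hvan (v * u * G) (mul_mem (mul_mem hv hu) hG)

end Matrix

theorem stmt12_general {K : Type*} [Field K] {n : ℕ}
    (X : Matrix (Fin n) (Fin n) K)
    (hX : ∀ i j, j ≤ i → X i j = 0)
    (h k : Fin n)
    (hvan : ∀ G : (Matrix (Fin n) (Fin n) K)ˣ,
      (∀ i j, j < i → (G : Matrix (Fin n) (Fin n) K) i j = 0) →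
      ((G : Matrix (Fin n) (Fin n) K) * X * (↑G⁻¹ : Matrix (Fin n) (Fin n) K)) h k = 0) :
    ∀ G : (Matrix (Fin n) (Fin n) K)ˣ,
      (∀ i j, j < i → (G : Matrix (Fin n) (Fin n) K) i j = 0) →
      ∀ i j : Fin n, h ≤ i → i ≤ k → h ≤ j → j ≤ k →
        ((G : Matrix (Fin n) (Fin n) K) * X * (↑G⁻¹ : Matrix (Fin n) (Fin n) K)) i j = 0 := by
  intro G hG i j hhi _ _ hjk
  exact conj_apply_eq_zero_of_le_of_le hX (fun G' hG' => hvan G' fun _ _ hlt => hG' hlt)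
    (fun _ _ hlt => hG _ _ hlt) hhi hjk

/-- If the `(h,k)` entry vanishes identically on the orbit of a nonzero strictly upper
triangular `X` under conjugation by invertible upper triangular matrices, then so do all
the `(i,j)` entries with `h ≤ i, j ≤ k`. -/
theorem stmt12 {K : Type*} [Field K] [IsAlgClosed K] {n : ℕ}
    (X : Matrix (Fin n) (Fin n) K)
    (hX : ∀ i j, j ≤ i → X i j = 0) (hX0 : X ≠ 0)
    (h k : Fin n)
    (hvan : ∀ G : (Matrix (Fin n) (Fin n) K)ˣ,
      (∀ i j, j < i → (G : Matrix (Fin n) (Fin n) K) i j = 0) →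
      ((G : Matrix (Fin n) (Fin n) K) * X * (↑G⁻¹ : Matrix (Fin n) (Fin n) K)) h k = 0) :
    ∀ G : (Matrix (Fin n) (Fin n) K)ˣ,
      (∀ i j, j < i → (G : Matrix (Fin n) (Fin n) K) i j = 0) →
      ∀ i j : Fin n, h ≤ i → i ≤ k → h ≤ j → j ≤ k →
        ((G : Matrix (Fin n) (Fin n) K) * X * (↑G⁻¹ : Matrix (Fin n) (Fin n) K)) i j = 0 :=
  stmt12_general X hX h k hvan
end

section
/- The map γ_n sending a commuting pair (X,Y) of n×n matrices (not both rows of all 2×2 minors vanishing, i.e., (X,Y) ∉ 𝒞_0(n,K)) to the point of the Grassmannian G(2,K^{n²}) with Plücker coordinates p_{(i,j)(h,k)} = x_{i,j} y_{h,k} - y_{i,j} x_{h,k} is well defined, and its image satisfies the linear equations ∑_{k=1}^n p_{(i,k)(k,j)} = 0 for all i,j = 1,...,n. -/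
open Matrix

/-! If `s X + t Y = 0`, evaluating at the entries `(i,j)` and `(h,k)` gives a `2×2` linear system
whose determinant is the minor `p_{(i,j)(h,k)}`; so a nonzero minor forces `s = t = 0` and `X, Y`
span a plane. The linear relations are the entries of `X Y - Y X = 0`. -/

theorem LinearIndependent.pair_of_apply_det_ne_zero {R V : Type*} [CommRing R] [NoZeroDivisors R]
    [AddCommGroup V] [Module R V] (φ ψ : V →ₗ[R] R) {x y : V}
    (hdet : φ x * ψ y - φ y * ψ x ≠ 0) : LinearIndependent R ![x, y] := by
  rw [LinearIndependent.pair_iff]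
  intro s t hst
  have hφ : s * φ x + t * φ y = 0 := by simpa using congrArg φ hst
  have hψ : s * ψ x + t * ψ y = 0 := by simpa using congrArg ψ hst
  have hs : s * (φ x * ψ y - φ y * ψ x) = 0 := by linear_combination ψ y * hφ - φ y * hψ
  have ht : t * (φ x * ψ y - φ y * ψ x) = 0 := by linear_combination φ x * hψ - ψ x * hφ
  exact ⟨(mul_eq_zero.mp hs).resolve_right hdet, (mul_eq_zero.mp ht).resolve_right hdet⟩

theorem Matrix.linearIndependent_pair_of_minor_ne_zero {R m n : Type*} [CommRing R]
    [NoZeroDivisors R] {X Y : Matrix m n R} {i h : m} {j k : n}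
    (hminor : X i j * Y h k - Y i j * X h k ≠ 0) : LinearIndependent R ![X, Y] :=
  .pair_of_apply_det_ne_zero (entryLinearMap R R i j) (entryLinearMap R R h k) hminor

theorem finrank_span_pair_eq_two {K V : Type*} [DivisionRing K] [AddCommGroup V] [Module K V]
    {x y : V} (h : LinearIndependent K ![x, y]) :
    Module.finrank K (Submodule.span K {x, y}) = 2 := by
  rw [← range_cons_cons_empty x y ![], finrank_span_eq_card h, Fintype.card_fin]

theorem Matrix.sum_mul_sub_mul_eq_commutator_apply {R n : Type*} [Fintype n] [CommRing R]
    (X Y : Matrix n n R) (i j : n) :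
    ∑ k, (X i k * Y k j - Y i k * X k j) = (X * Y - Y * X) i j := by
  simp only [sub_apply, mul_apply, Finset.sum_sub_distrib]

theorem stmt18_general {K : Type*} [Field K] {n : ℕ}
    (X Y : Matrix (Fin n) (Fin n) K) (hcomm : X * Y = Y * X)
    (hC0 : ¬ ∀ i j h k : Fin n, X i j * Y h k - Y i j * X h k = 0) :
    Module.finrank K ↥(Submodule.span K {X, Y}) = 2 ∧
    ∀ i j : Fin n, ∑ k, (X i k * Y k j - Y i k * X k j) = 0 := by
  constructor
  · push Not at hC0
    obtain ⟨i, j, h, k, hminor⟩ := hC0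
    exact finrank_span_pair_eq_two (linearIndependent_pair_of_minor_ne_zero hminor)
  · intro i j
    rw [sum_mul_sub_mul_eq_commutator_apply, hcomm, sub_self, Matrix.zero_apply]

/-- For a commuting pair `(X,Y)` not all of whose `2×2` minors
`p_{(i,j)(h,k)} = x_{i,j} y_{h,k} - y_{i,j} x_{h,k}` vanish, the map `γ_n` is well
defined: the span of `X, Y` is a genuine 2-plane (a point of `G(2,K^{n²})` with the
minors as Plücker coordinates), and the image satisfies the linear equations
`∑_k p_{(i,k)(k,j)} = 0`. -/
theorem stmt18 {K : Type*} [Field K] [IsAlgClosed K] {n : ℕ}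
    (X Y : Matrix (Fin n) (Fin n) K) (hcomm : X * Y = Y * X)
    (hC0 : ¬ ∀ i j h k : Fin n, X i j * Y h k - Y i j * X h k = 0) :
    Module.finrank K ↥(Submodule.span K {X, Y}) = 2 ∧
    ∀ i j : Fin n, ∑ k, (X i k * Y k j - Y i k * X k j) = 0 :=
  stmt18_general X Y hcomm hC0
end
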